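/- For the PEG G4 with the single rule E ← E + E / n, which is both left- and right-recursive, in the left-recursive extended semantics with the empty memoization table: G4[E] applied to the subject n+n+n yields (ε, E[E[n]+E[E[n]+E[n]]]), i.e., the + operator associates to the right. -/

import Mathlib

/-!
By induction on `k`, `E` parses `n (+ n)^k` as the right-nested tree. The seed of the
left-recursive fixpoint is the alternative `n`, since the memoized `E` fails. With that seed
memoized, `E + E` reads the seed, a `+`, and then calls `E` on a strictly shorter subject, which
is not yet memoized and is parsed right-nested by the induction hypothesis; this consumes the
whole input. With the new entry memoized, `E +` fails at the end of the input and `n` consumes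
less, so the bound stops growing after one step: only the right-nested tree is ever produced.
-/

/-- Parsing expressions over non-terminals `N` and terminals `T`. -/
inductive PExp (N T : Type) : Type where
  | empty : PExp N T
  | term : T → PExp N T
  | var : N → PExp N T
  | seq : PExp N T → PExp N T → PExp N T
  | choice : PExp N T → PExp N T → PExp N T
  | star : PExp N T → PExp N T
  | nott : PExp N T → PExp N T

/-- A PEG: a rule for every non-terminal and a starting expression.
(A PEG whose `prod` is a total function is a closed PEG.) -/
structure PEG (N T : Type) where
  prod : N → PExp N T
  start : PExp N T

/-- Symbols of parse strings: terminals and tagged brackets `A[...]`. -/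
inductive PSym (N T : Type) : Type where
  | t : T → PSym N T
  | node : N → List (PSym N T) → PSym N T

/-- Parse strings. -/
abbrev PStr (N T : Type) := List (PSym N T)

/-- Result of a match: `fail`, or a pair (remaining suffix, parse string). -/
inductive Res (N T : Type) : Type where
  | fail : Res N T
  | ok : List T → PStr N T → Res N T
/-- Memoization tables: partial functions from (non-terminal, subject) to results. -/
abbrev Memo (N T : Type) := N → List T → Option (Res N T)

/-- `L[(A,s) ↦ r]`. -/
def Memo.update {N T : Type} [DecidableEq N] [DecidableEq T]
    (L : Memo N T) (A : N) (s : List T) (r : Res N T) : Memo N T :=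
  fun B u => if B = A ∧ u = s then some r else L B u

/-- The empty memoization table. -/
def Memo.empty {N T : Type} : Memo N T := fun _ _ => none
mutual
/-- The left-recursive extended semantics `G[p] s L ⇝ r`. -/
inductive LMatch {N T : Type} [DecidableEq N] [DecidableEq T] (G : PEG N T) :
    PExp N T → List T → Memo N T → Res N T → Prop where
  | empty1 : LMatch G .empty s L (.ok s [])
  | char1 : LMatch G (.term a) (a :: s) L (.ok s [.t a])
  | char2 : b ≠ a → LMatch G (.term b) (a :: s) L .fail
  | char3 : LMatch G (.term a) [] L .fail
  | lvar1 : L A s = none →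
      LMatch G (G.prod A) s (Memo.update L A s .fail) (.ok s1 t1) →
      Inc G A s (Memo.update L A s (.ok s1 t1)) (.ok s2 t2) →
      LMatch G (.var A) s L (.ok s2 [.node A t2])
  | lvar2 : L A s = none →
      LMatch G (G.prod A) s (Memo.update L A s .fail) .fail →
      LMatch G (.var A) s L .fail
  | lvar3 : L A s = some .fail → LMatch G (.var A) s L .fail
  | lvar4 : L A s = some (.ok y t) → LMatch G (.var A) s L (.ok y [.node A t])
  | con1 : LMatch G p1 s L (.ok s1 t1) → LMatch G p2 s1 L (.ok s2 t2) →
      LMatch G (.seq p1 p2) s L (.ok s2 (t1 ++ t2))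
  | con2 : LMatch G p1 s L (.ok s1 t1) → LMatch G p2 s1 L .fail →
      LMatch G (.seq p1 p2) s L .fail
  | con3 : LMatch G p1 s L .fail → LMatch G (.seq p1 p2) s L .fail
  | ord1 : LMatch G p1 s L (.ok s1 t1) → LMatch G (.choice p1 p2) s L (.ok s1 t1)
  | ord2 : LMatch G p1 s L .fail → LMatch G p2 s L .fail →
      LMatch G (.choice p1 p2) s L .fail
  | ord3 : LMatch G p1 s L .fail → LMatch G p2 s L (.ok s1 t1) →
      LMatch G (.choice p1 p2) s L (.ok s1 t1)
  | not1 : LMatch G p s L .fail → LMatch G (.nott p) s L (.ok s [])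
  | not2 : LMatch G p s L (.ok s1 t1) → LMatch G (.nott p) s L .fail
  | rep1 : LMatch G p s L .fail → LMatch G (.star p) s L (.ok s [])
  | rep2 : LMatch G p s L (.ok s1 t1) → LMatch G (.star p) s1 L (.ok s2 t2) →
      LMatch G (.star p) s L (.ok s2 (t1 ++ t2))

/-- The auxiliary bound-increasing relation `G[P(A)] s L ⇝INC r`. -/
inductive Inc {N T : Type} [DecidableEq N] [DecidableEq T] (G : PEG N T) :
    N → List T → Memo N T → Res N T → Prop where
  | inc1 : y ≠ [] →
      LMatch G (G.prod A) (x ++ y ++ z ++ w)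
        (Memo.update L A (x ++ y ++ z ++ w) (.ok (y ++ z ++ w) t1)) (.ok (z ++ w) t2) →
      Inc G A (x ++ y ++ z ++ w)
        (Memo.update L A (x ++ y ++ z ++ w) (.ok (z ++ w) t2)) (.ok w t3) →
      Inc G A (x ++ y ++ z ++ w)
        (Memo.update L A (x ++ y ++ z ++ w) (.ok (y ++ z ++ w) t1)) (.ok w t3)
  | inc2 : L A s = some r → LMatch G (G.prod A) s L .fail → Inc G A s L r
  | inc3 :
      LMatch G (G.prod A) (x ++ y ++ z)
        (Memo.update L A (x ++ y ++ z) (.ok z t1)) (.ok (y ++ z) t2) →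
      Inc G A (x ++ y ++ z)
        (Memo.update L A (x ++ y ++ z) (.ok z t1)) (.ok z t1)
end

/-- The alphabet `{n, +}`. -/
inductive T4 : Type where
  | n : T4
  | plus : T4
deriving DecidableEq

/-- The PEG `E ← E + E / n` (single non-terminal `E`, modelled by `Unit`),
which is both left- and right-recursive. -/
def G4 : PEG Unit T4 where
  prod := fun _ => PExp.choice
    (PExp.seq (PExp.seq (PExp.var ()) (PExp.term T4.plus)) (PExp.var ()))
    (PExp.term T4.n)
  start := PExp.var ()

/-- The parse string `E[n]`. -/
def E4n : PSym Unit T4 := PSym.node () [PSym.t T4.n]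

theorem Memo.update_apply_self {N T : Type} [DecidableEq N] [DecidableEq T]
    (L : Memo N T) (A : N) (s : List T) (r : Res N T) : L.update A s r A s = some r := by
  simp [Memo.update]

theorem Memo.update_apply_of_ne {N T : Type} [DecidableEq N] [DecidableEq T]
    (L : Memo N T) (A : N) {s u : List T} (r : Res N T) (h : u ≠ s) :
    L.update A s r A u = L A u := by
  simp [Memo.update, h]

theorem Inc.of_grow_of_shrink {N T : Type} [DecidableEq N] [DecidableEq T] {G : PEG N T}
    {A : N} {L : Memo N T} {s r₁ r₂ : List T} {t₁ t₂ t₃ : PStr N T}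
    (h₁ : r₁ <:+ s) (h₂ : r₂ <:+ r₁) (hlt : r₂.length < r₁.length)
    (hgrow : LMatch G (G.prod A) s (L.update A s (.ok r₁ t₁)) (.ok r₂ t₂))
    (hshrink : LMatch G (G.prod A) s (L.update A s (.ok r₂ t₂)) (.ok r₁ t₃)) :
    Inc G A s (L.update A s (.ok r₁ t₁)) (.ok r₂ t₂) := by
  obtain ⟨x, rfl⟩ := h₁
  obtain ⟨y, rfl⟩ := h₂
  have hy : y ≠ [] := by rintro rfl; simp at hlt
  have := Inc.inc1 (x := x) (z := []) (w := r₂) hy (by simpa using hgrow)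
    (by simpa using Inc.inc3 (x := x) (y := y) (z := r₂) (by simpa using hshrink))
  simpa using this

def chain : ℕ → List T4
  | 0 => [T4.n]
  | k + 1 => T4.n :: T4.plus :: chain k

theorem chain_length (k : ℕ) : (chain k).length = 2 * k + 1 := by
  induction k with
  | zero => rfl
  | succ k ih => simp only [chain, List.length_cons, ih]; ring

/-- The contents of the right-nested parse `E[E[n]+E[E[n]+ ⋯ +E[n]]]` of `chain k`. -/
def rightNested : ℕ → PStr Unit T4
  | 0 => [PSym.t T4.n]
  | k + 1 => [E4n, PSym.t T4.plus, PSym.node () (rightNested k)]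

namespace G4

theorem prod_of_memo_fail {L : Memo Unit T4} {r : List T4} (h : L () (T4.n :: r) = some .fail) :
    LMatch G4 (G4.prod ()) (T4.n :: r) L (.ok r [PSym.t T4.n]) :=
  .ord3 (.con3 (.con3 (.lvar3 h))) .char1

theorem prod_of_memo_ok_nil {L : Memo Unit T4} {r : List T4} {t : PStr Unit T4}
    (h : L () (T4.n :: r) = some (.ok [] t)) :
    LMatch G4 (G4.prod ()) (T4.n :: r) L (.ok r [PSym.t T4.n]) :=
  .ord3 (.con3 (.con2 (.lvar4 h) .char3)) .char1

theorem prod_of_memo_ok_plus {L : Memo Unit T4} {s r r' : List T4} {t t' : PStr Unit T4}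
    (h : L () s = some (.ok (T4.plus :: r) t)) (hr : LMatch G4 (.var ()) r L (.ok r' t')) :
    LMatch G4 (G4.prod ()) s L (.ok r' ([PSym.node () t, PSym.t T4.plus] ++ t')) :=
  .ord1 (.con1 (.con1 (.lvar4 h) .char1) hr)

theorem var_chain (k : ℕ) (L : Memo Unit T4) (hL : ∀ j ≤ k, L () (chain j) = none) :
    LMatch G4 (.var ()) (chain k) L (.ok [] [PSym.node () (rightNested k)]) := by
  induction k generalizing L with
  | zero =>
    exact .lvar1 (hL 0 le_rfl) (prod_of_memo_fail (Memo.update_apply_self ..))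
      (Inc.inc3 (x := [T4.n]) (y := []) (z := [])
        (prod_of_memo_ok_nil (Memo.update_apply_self ..)))
  | succ k ih =>
    set L₁ := L.update () (chain (k + 1)) (.ok (T4.plus :: chain k) [PSym.t T4.n])
    have hL₁ : ∀ j ≤ k, L₁ () (chain j) = none := fun j hj => by
      have hne : chain j ≠ chain (k + 1) := fun h => by
        have := congrArg List.length h
        simp only [chain_length] at this
        omega
      exact (Memo.update_apply_of_ne _ _ _ hne).trans (hL j (by omega))
    refine .lvar1 (hL (k + 1) le_rfl) (prod_of_memo_fail (Memo.update_apply_self ..)) ?_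
    exact Inc.of_grow_of_shrink (List.suffix_cons _ _) List.nil_suffix (by simp)
      (prod_of_memo_ok_plus (Memo.update_apply_self ..) (ih L₁ hL₁))
      (prod_of_memo_ok_nil (Memo.update_apply_self ..))

end G4

/-- Matching `E` against `n+n+n` with the empty memoization table consumes the
whole subject and yields `E[E[n]+E[E[n]+E[n]]]`: `+` is right-associative. -/
theorem G4_right_assoc :
    LMatch G4 (PExp.var ()) [T4.n, T4.plus, T4.n, T4.plus, T4.n] Memo.empty
      (Res.ok []
        [PSym.node ()
          [E4n, PSym.t T4.plus,
           PSym.node () [E4n, PSym.t T4.plus, E4n]]]) :=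
  G4.var_chain 2 Memo.empty fun _ _ => rfl
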